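/- arXiv:1406.3839 — 2 statements merged into one kernel-verified Lean document; each statement's English description precedes it below -/
import Mathlib

section
/- Let A be a finite (possibly noncommutative) ring, s a natural number, K₁,…,K_s finite fields with |K_i| = q_i, n₁,…,n_s natural numbers, and p : A → ∏_{i=1}^{s} Mat_{n_i}(K_i) a surjective ring homomorphism such that every element of the kernel of p is nilpotent. Then #{a ∈ A : a nilpotent} · ∏_{i=1}^{s} |GL_{n_i}(K_i)| = |A^×| · ∏_{i=1}^{s} q_i^{n_i(n_i−1)}. -/
open Finset

open Matrix

section Blocks
variable {R : Type*} [CommRing R] {a b : Type*} [Fintype a] [Fintype b]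
    [DecidableEq a] [DecidableEq b]

lemma fromBlocks_pow_exists (A : Matrix a a R) (C : Matrix a b R) (B : Matrix b b R) (k : ℕ) :
    ∃ C', (Matrix.fromBlocks A C 0 B) ^ k = Matrix.fromBlocks (A ^ k) C' 0 (B ^ k) := by
  induction k with
  | zero => exact ⟨0, by simp [Matrix.fromBlocks_one]⟩
  | succ k ih =>
    obtain ⟨C', h⟩ := ih
    refine ⟨A ^ k * C + C' * B, ?_⟩
    rw [pow_succ, h, pow_succ, pow_succ, Matrix.fromBlocks_multiply]
    simp [Matrix.mul_zero, Matrix.zero_mul]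

lemma isNilpotent_fromBlocks_iff {A : Matrix a a R} {C : Matrix a b R} {B : Matrix b b R} :
    IsNilpotent (Matrix.fromBlocks A C 0 B) ↔ IsNilpotent A ∧ IsNilpotent B := by
  constructor
  · rintro ⟨k, hk⟩
    obtain ⟨C', h⟩ := fromBlocks_pow_exists A C B k
    rw [hk] at h
    constructor
    · exact ⟨k, by have := congrArg Matrix.toBlocks₁₁ h; simpa [show Matrix.toBlocks₁₁ (0 : Matrix (a ⊕ b) (a ⊕ b) R) = 0 from Matrix.ext fun _ _ => rfl] using this.symm⟩
    · exact ⟨k, by have := congrArg Matrix.toBlocks₂₂ h; simpa [show Matrix.toBlocks₂₂ (0 : Matrix (a ⊕ b) (a ⊕ b) R) = 0 from Matrix.ext fun _ _ => rfl] using this.symm⟩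
  · rintro ⟨⟨ka, hka⟩, ⟨kb, hkb⟩⟩
    refine ⟨ka + kb, ?_⟩
    obtain ⟨C1, h1⟩ := fromBlocks_pow_exists A C B ka
    obtain ⟨C2, h2⟩ := fromBlocks_pow_exists A C B kb
    rw [pow_add, h1, h2, hka, hkb, Matrix.fromBlocks_multiply]
    simp

end Blocks

section Shift
variable (K : Type*) [Field K]

/-- The nilpotent shift matrix. -/
def shiftM (d : ℕ) : Matrix (Fin d) (Fin d) K :=
  Matrix.of fun k i => if (k : ℕ) = (i : ℕ) + 1 then 1 else 0

lemma shiftM_pow (d p : ℕ) :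
    (shiftM K d) ^ p = Matrix.of fun (k i : Fin d) => if (k : ℕ) = (i : ℕ) + p then 1 else 0 := by
  induction p with
  | zero =>
    ext k i
    simp [Matrix.one_apply, Fin.ext_iff, eq_comm]
  | succ p ih =>
    ext k i
    rw [pow_succ, Matrix.mul_apply]
    simp only [ih]
    simp only [shiftM, Matrix.of_apply]
    by_cases h : (i : ℕ) + 1 < d
    · rw [Finset.sum_eq_single (⟨(i : ℕ) + 1, h⟩ : Fin d)]
      · rw [if_pos (show ((⟨(i : ℕ) + 1, h⟩ : Fin d) : ℕ) = (i : ℕ) + 1 from rfl), mul_one]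
        by_cases hk : (k : ℕ) = (i : ℕ) + (p + 1)
        · rw [if_pos (show (k : ℕ) = ((⟨(i : ℕ) + 1, h⟩ : Fin d) : ℕ) + p by simp; omega),
            if_pos hk]
        · rw [if_neg (show ¬(k : ℕ) = ((⟨(i : ℕ) + 1, h⟩ : Fin d) : ℕ) + p by simp; omega),
            if_neg hk]
      · intro j _ hj
        rw [if_neg (fun hc => hj (Fin.ext hc)), mul_zero]
      · intro hmem; exact absurd (Finset.mem_univ _) hmem
    · rw [Finset.sum_eq_zero fun j _ => by
          rw [if_neg (show ¬(j : ℕ) = (i : ℕ) + 1 by have := j.isLt; omega), mul_zero],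
        if_neg (show ¬(k : ℕ) = (i : ℕ) + (p + 1) by have := k.isLt; omega)]

lemma isNilpotent_shiftM (d : ℕ) : IsNilpotent (shiftM K d) := by
  refine ⟨d, ?_⟩
  ext k i
  rw [shiftM_pow]
  simp only [Matrix.of_apply, Matrix.zero_apply]
  rw [if_neg (by omega)]

end Shift

section CondCount
variable {K : Type*} [Field K] [Fintype K] {n : ℕ}

/-- The condition that `M` maps the vector `w i` to `w (i+1)` (or `0` for the last one). -/
def condW {d : ℕ} (w : Fin d → (Fin n → K)) (M : Matrix (Fin n) (Fin n) K) : Prop :=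
  ∀ i : Fin d, M.mulVec (w i) = if h : (i : ℕ) + 1 < d then w ⟨(i : ℕ) + 1, h⟩ else 0

lemma card_cond {d m : ℕ} (hm : d + m = n) (w : Fin d → (Fin n → K))
    (hw : LinearIndependent K w) :
    Nat.card {M : Matrix (Fin n) (Fin n) K // IsNilpotent M ∧ condW w M}
      = Nat.card {B : Matrix (Fin m) (Fin m) K // IsNilpotent B} * Fintype.card K ^ (d * m) := by
  classical
  set W : Submodule K (Fin n → K) := Submodule.span K (Set.range w) with hWdef
  obtain ⟨U, hU⟩ := W.exists_isCompl
  have hWd : Module.finrank K W = d := by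
    rw [hWdef, finrank_span_eq_card hw, Fintype.card_fin]
  have hUm : Module.finrank K U = m := by
    have h := Submodule.finrank_add_eq_of_isCompl hU
    rw [hWd, Module.finrank_fintype_fun_eq_card, Fintype.card_fin] at h
    omega
  let bW : Module.Basis (Fin d) K W := Module.Basis.span hw
  let bU : Module.Basis (Fin m) K U := Module.finBasisOfFinrankEq K U hUm
  let b : Module.Basis (Fin d ⊕ Fin m) K (Fin n → K) := (bW.prod bU).map (Submodule.prodEquivOfIsCompl W U hU)
  have hb : ∀ i : Fin d, b (Sum.inl i) = w i := by
    intro i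
    show (Submodule.prodEquivOfIsCompl W U hU) ((bW.prod bU) (Sum.inl i)) = w i
    rw [Submodule.coe_prodEquivOfIsCompl']
    rw [Module.Basis.prod_apply_inl_fst]
    simp only [Module.Basis.prod_apply_inl_snd, Submodule.coe_zero, add_zero]
    exact congrArg Subtype.val (Module.Basis.span_apply hw i)
  let Φ : Matrix (Fin n) (Fin n) K ≃ₐ[K] Matrix (Fin d ⊕ Fin m) (Fin d ⊕ Fin m) K :=
    (Matrix.toLinAlgEquiv').trans (LinearMap.toMatrixAlgEquiv b)
  have hΦnil : ∀ M : Matrix (Fin n) (Fin n) K, (IsNilpotent M ↔ IsNilpotent (Φ M)) := by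
    intro M
    constructor
    · intro h; exact h.map Φ.toAlgHom
    · intro h
      have := h.map Φ.symm.toAlgHom
      simpa using this
  have hΦcond : ∀ M : Matrix (Fin n) (Fin n) K,
      (condW w M ↔ ((Φ M).toBlocks₁₁ = shiftM K d ∧ (Φ M).toBlocks₂₁ = 0)) := by
    intro M
    have hent : ∀ (k : Fin d ⊕ Fin m) (i : Fin d),
        (Φ M) k (Sum.inl i) = b.repr (M.mulVec (w i)) k := by
      intro k i
      show (LinearMap.toMatrixAlgEquiv b (Matrix.toLinAlgEquiv' M)) k (Sum.inl i) = _
      rw [LinearMap.toMatrixAlgEquiv_apply, hb, Matrix.toLinAlgEquiv'_apply]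
    constructor
    · intro hc
      constructor
      · ext k i
        rw [Matrix.toBlocks₁₁, Matrix.of_apply, hent, hc i]
        by_cases h : (i : ℕ) + 1 < d
        · rw [dif_pos h, ← hb ⟨(i : ℕ) + 1, h⟩, b.repr_self,
            Finsupp.single_apply]
          simp only [shiftM, Matrix.of_apply, Sum.inl.injEq]
          by_cases hk : (k : ℕ) = (i : ℕ) + 1
          · rw [if_pos (Fin.ext hk).symm, if_pos hk]
          · rw [if_neg (fun hc' => hk (by rw [← hc'])), if_neg hk]
        · rw [dif_neg h]
          simp only [map_zero, Finsupp.coe_zero, Pi.zero_apply, shiftM, Matrix.of_apply]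
          rw [eq_comm, if_neg (by have := k.isLt; omega)]
      · ext k i
        rw [Matrix.toBlocks₂₁, Matrix.of_apply, hent, hc i]
        by_cases h : (i : ℕ) + 1 < d
        · rw [dif_pos h, ← hb ⟨(i : ℕ) + 1, h⟩, b.repr_self, Finsupp.single_apply]
          simp
        · rw [dif_neg h]; simp
    · rintro ⟨h11, h21⟩ i
      have hrepr : ∀ k, b.repr (M.mulVec (w i)) k =
          b.repr (if h : (i : ℕ) + 1 < d then w ⟨(i : ℕ) + 1, h⟩ else 0) k := by
        rintro (k | k)
        · rw [← hent (Sum.inl k) i]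
          have : (Φ M) (Sum.inl k) (Sum.inl i) = (Φ M).toBlocks₁₁ k i := rfl
          rw [this, h11]
          by_cases h : (i : ℕ) + 1 < d
          · rw [dif_pos h, ← hb ⟨(i : ℕ) + 1, h⟩, b.repr_self, Finsupp.single_apply]
            simp only [shiftM, Matrix.of_apply, Sum.inl.injEq]
            by_cases hk : (k : ℕ) = (i : ℕ) + 1
            · rw [if_pos hk, if_pos (Fin.ext hk).symm]
            · rw [if_neg hk, if_neg (fun hc' => hk (by rw [← hc']))]
          · rw [dif_neg h]
            simp only [map_zero, Finsupp.coe_zero, Pi.zero_apply, shiftM, Matrix.of_apply]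
            rw [if_neg (by have := k.isLt; omega)]
        · rw [← hent (Sum.inr k) i]
          have : (Φ M) (Sum.inr k) (Sum.inl i) = (Φ M).toBlocks₂₁ k i := rfl
          rw [this, h21]
          by_cases h : (i : ℕ) + 1 < d
          · rw [dif_pos h, ← hb ⟨(i : ℕ) + 1, h⟩, b.repr_self, Finsupp.single_apply]
            simp
          · rw [dif_neg h]; simp
      have := b.repr.injective (Finsupp.ext hrepr)
      exact this
  have e1 : {M : Matrix (Fin n) (Fin n) K // IsNilpotent M ∧ condW w M} ≃
      {M' : Matrix (Fin d ⊕ Fin m) (Fin d ⊕ Fin m) K //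
        IsNilpotent M' ∧ M'.toBlocks₁₁ = shiftM K d ∧ M'.toBlocks₂₁ = 0} :=
    Equiv.subtypeEquiv Φ.toEquiv (fun M => and_congr (hΦnil M) (hΦcond M))
  have e2 : {M' : Matrix (Fin d ⊕ Fin m) (Fin d ⊕ Fin m) K //
        IsNilpotent M' ∧ M'.toBlocks₁₁ = shiftM K d ∧ M'.toBlocks₂₁ = 0} ≃
      {B : Matrix (Fin m) (Fin m) K // IsNilpotent B} × Matrix (Fin d) (Fin m) K := by
    refine ⟨fun x => (⟨x.1.toBlocks₂₂, ?_⟩, x.1.toBlocks₁₂), fun y =>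
      ⟨Matrix.fromBlocks (shiftM K d) y.2 0 y.1.1, ?_, by simp, by simp⟩, ?_, ?_⟩
    · obtain ⟨M', hnil, h11, h21⟩ := x
      have : M' = Matrix.fromBlocks (shiftM K d) M'.toBlocks₁₂ 0 M'.toBlocks₂₂ := by
        conv_lhs => rw [← Matrix.fromBlocks_toBlocks M']
        rw [h11, h21]
      rw [this] at hnil
      exact (isNilpotent_fromBlocks_iff.mp hnil).2
    · exact isNilpotent_fromBlocks_iff.mpr ⟨isNilpotent_shiftM K d, y.1.2⟩
    · rintro ⟨M', hnil, h11, h21⟩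
      apply Subtype.ext
      simp only
      conv_rhs => rw [← Matrix.fromBlocks_toBlocks M']
      rw [h11, h21]
    · rintro ⟨⟨B, hB⟩, R⟩
      simp
  rw [Nat.card_congr (e1.trans e2), Nat.card_prod]
  congr 1
  rw [Nat.card_eq_fintype_card]
  show Fintype.card (Fin d → Fin m → K) = _
  rw [Fintype.card_fun, Fintype.card_fun, Fintype.card_fin, Fintype.card_fin, ← pow_mul,
    Nat.mul_comm]
end CondCount

section Helpers

lemma nat_card_sigma {ι : Type*} [Fintype ι] (f : ι → Type*) [∀ i, Finite (f i)] :
    Nat.card (Σ i, f i) = ∑ i, Nat.card (f i) := by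
  letI : ∀ i, Fintype (f i) := fun i => Fintype.ofFinite (f i)
  simp_rw [Nat.card_eq_fintype_card]
  exact Fintype.card_sigma

lemma tele (q n : ℕ) (hq : 1 ≤ q) : ∀ t, 1 ≤ t → t ≤ n →
    ∑ r ∈ Finset.range t, (∏ i ∈ Finset.range (n - r), (q ^ n - q ^ i)) * q ^ ((n - 1) * r)
      = (∏ i ∈ Finset.range (n - t + 1), (q ^ n - q ^ i)) * q ^ (n * (t - 1)) := by
  intro t
  induction t with
  | zero => omega
  | succ t IH =>
    intro _ hle
    by_cases ht : t = 0
    · subst ht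
      rw [Finset.sum_range_one]
      rw [show n - 1 + 1 = n - 0 by omega]
      simp
    · have h1t : 1 ≤ t := by omega
      have htn : t < n := by omega
      rw [Finset.sum_range_succ, IH h1t (le_of_lt htn)]
      obtain ⟨s, rfl⟩ : ∃ s, t = s + 1 := ⟨t - 1, by omega⟩
      obtain ⟨c, rfl⟩ : ∃ c, n = (s + 1) + 1 + c := ⟨n - s - 2, by omega⟩
      set n := s + 1 + 1 + c with hn
      have e1 : n - (s + 1) + 1 = (c + 1) + 1 := by omega
      have e2 : n - (s + 1) = c + 1 := by omega
      have e3 : n - (s + 1 + 1) + 1 = c + 1 := by omega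
      have e4 : (s + 1 + 1) - 1 = s + 1 := by omega
      have e5 : (s + 1) - 1 = s := by omega
      rw [e1, e2, e3, e4, e5, Finset.prod_range_succ]
      have h1 : q ^ (c + 1) * q ^ (n * s) = q ^ ((n - 1) * (s + 1)) := by
        rw [← pow_add]
        congr 1
        rw [show n - 1 = s + 1 + c by omega, hn]
        ring
      have h2 : q ^ ((n - 1) * (s + 1)) ≤ q ^ (n * (s + 1)) :=
        Nat.pow_le_pow_right hq (Nat.mul_le_mul_right _ (Nat.sub_le n 1))
      have key : (q ^ n - q ^ (c + 1)) * q ^ (n * s) + q ^ ((n - 1) * (s + 1))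
          = q ^ (n * (s + 1)) := by
        rw [Nat.sub_mul, h1, ← pow_add, show n + n * s = n * (s + 1) by ring]
        have h3 : q ^ ((n - 1) * (s + 1)) ≤ q ^ (n * (s + 1)) := h2
        omega
      calc (∏ i ∈ Finset.range (c + 1), (q ^ n - q ^ i)) * (q ^ n - q ^ (c + 1)) * q ^ (n * s)
            + (∏ i ∈ Finset.range (c + 1), (q ^ n - q ^ i)) * q ^ ((n - 1) * (s + 1))
          = (∏ i ∈ Finset.range (c + 1), (q ^ n - q ^ i)) *
              ((q ^ n - q ^ (c + 1)) * q ^ (n * s) + q ^ ((n - 1) * (s + 1))) := by ring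
        _ = (∏ i ∈ Finset.range (c + 1), (q ^ n - q ^ i)) * q ^ (n * (s + 1)) := by rw [key]

end Helpers

section FH
attribute [local instance] Classical.propDecidable
set_option linter.unusedSectionVars false
variable {K : Type*} [Field K] [Fintype K]

lemma mulVec_pow_eq_zero_of_le {n : ℕ} {M : Matrix (Fin n) (Fin n) K} {v : Fin n → K}
    {d t : ℕ} (hd : (M ^ d).mulVec v = 0) (h : d ≤ t) : (M ^ t).mulVec v = 0 := by
  obtain ⟨e, rfl⟩ := Nat.exists_eq_add_of_le h
  rw [add_comm, pow_add, ← Matrix.mulVec_mulVec, hd, Matrix.mulVec_zero]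

lemma krylov_indep {n : ℕ} {M : Matrix (Fin n) (Fin n) K} {v : Fin n → K}
    (hex : ∃ k, (M ^ k).mulVec v = 0) :
    LinearIndependent K (fun i : Fin (Nat.find hex) => (M ^ (i : ℕ)).mulVec v) := by
  classical
  set d := Nat.find hex with hd
  rw [Fintype.linearIndependent_iff]
  intro g hg
  suffices H : ∀ a : ℕ, ∀ i : Fin d, (i : ℕ) = a → g i = 0 by
    intro i; exact H i i rfl
  intro a
  induction a using Nat.strong_induction_on with
  | _ a IH =>
  intro i hi
  have happ := congrArg (fun x => (M ^ (d - 1 - a)).mulVec x) hg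
  simp only [Matrix.mulVec_zero] at happ
  have hpush : (M ^ (d - 1 - a)).mulVec (∑ j : Fin d, g j • (M ^ (j : ℕ)).mulVec v)
      = ∑ j : Fin d, g j • (M ^ ((d - 1 - a) + (j : ℕ))).mulVec v := by
    simp_rw [← Matrix.mulVecLin_apply, map_sum, _root_.map_smul, Matrix.mulVecLin_apply,
      Matrix.mulVec_mulVec, ← pow_add]
  rw [hpush] at happ
  have hterm : ∀ j : Fin d, j ∈ Finset.univ → j ≠ i →
      g j • (M ^ ((d - 1 - a) + (j : ℕ))).mulVec v = 0 := by
    intro j _ hj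
    rcases lt_or_gt_of_ne (show (j : ℕ) ≠ a from fun h => hj (Fin.ext (h.trans hi.symm))) with
      hlt | hgt
    · rw [IH _ hlt j rfl, zero_smul]
    · rw [mulVec_pow_eq_zero_of_le (Nat.find_spec hex) (by have := i.isLt; omega), smul_zero]
  rw [Finset.sum_eq_single i hterm (fun h => absurd (Finset.mem_univ i) h)] at happ
  by_contra hgi
  have hvec : (M ^ ((d - 1 - a) + (i : ℕ))).mulVec v = 0 :=
    (smul_eq_zero.mp happ).resolve_left hgi
  have hlt : (d - 1 - a) + (i : ℕ) < d := by have := i.isLt; omega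
  exact Nat.find_min hex hlt hvec

lemma final_numeric (q n A : ℕ) (hq : 2 ≤ q) (hn : 1 ≤ n)
    (h : A * q ^ n = A + ∑ j ∈ Finset.range n,
        (∏ i ∈ Finset.range (j + 1), (q ^ n - q ^ i)) *
          (q ^ ((n - (j + 1)) * (n - (j + 1) - 1)) * q ^ ((j + 1) * (n - (j + 1))))) :
    A = q ^ (n * (n - 1)) := by
  have hexp : ∀ j, j < n →
      (n - (j + 1)) * (n - (j + 1) - 1) + (j + 1) * (n - (j + 1)) = (n - 1) * (n - 1 - j) := by
    intro j hj
    obtain ⟨c, rfl⟩ : ∃ c, n = j + 1 + c := ⟨n - j - 1, by omega⟩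
    rw [show j + 1 + c - (j + 1) = c by omega, show j + 1 + c - 1 = j + c by omega,
      show j + c - j = c by omega]
    cases c with
    | zero => simp
    | succ c' => rw [show c' + 1 - 1 = c' by omega]; ring
  rw [Finset.sum_congr rfl (fun j hj => by
    rw [← pow_add, hexp j (Finset.mem_range.mp hj)])] at h
  have hrefl := Finset.sum_range_reflect
    (fun j => (∏ i ∈ Finset.range (j + 1), (q ^ n - q ^ i)) * q ^ ((n - 1) * (n - 1 - j))) n
  rw [← hrefl] at h
  rw [Finset.sum_congr rfl (fun j hj => by
    have hj' := Finset.mem_range.mp hj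
    rw [show n - 1 - (n - 1 - j) = j by omega, show n - 1 - j + 1 = n - j by omega])] at h
  rw [tele q n (by omega) n hn le_rfl, show n - n + 1 = 1 by omega,
    Finset.prod_range_one, pow_zero] at h
  -- h : A * q ^ n = A + (q ^ n - 1) * q ^ (n * (n - 1))
  have hQ : 2 ≤ q ^ n := by
    calc 2 = 2 ^ 1 := by norm_num
    _ ≤ q ^ n := Nat.pow_le_pow_left hq n |>.trans' (Nat.pow_le_pow_right (by omega) hn)
  have hA : A * q ^ n = A * (q ^ n - 1) + A := by
    have h5 : q ^ n = (q ^ n - 1) + 1 := by omega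
    calc A * q ^ n = A * ((q ^ n - 1) + 1) := by rw [← h5]
      _ = A * (q ^ n - 1) + A := by ring
  have h3 : A * (q ^ n - 1) = (q ^ n - 1) * q ^ (n * (n - 1)) := by omega
  have h4 : (q ^ n - 1) * A = (q ^ n - 1) * q ^ (n * (n - 1)) := by
    rw [Nat.mul_comm (q ^ n - 1) A]; exact h3
  exact Nat.eq_of_mul_eq_mul_left (by omega) h4

lemma main_case {K : Type*} [Field K] [Fintype K] {n : ℕ}
    (IH : ∀ m, m < n → Nat.card {M : Matrix (Fin m) (Fin m) K // IsNilpotent M}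
      = Fintype.card K ^ (m * (m - 1))) (hn : 0 < n) :
    Nat.card {M : Matrix (Fin n) (Fin n) K // IsNilpotent M}
      = Fintype.card K ^ (n * (n - 1)) := by
  classical
  set q := Fintype.card K with hqdef
  have hq2 : 2 ≤ q := Fintype.one_lt_card
  have hex : ∀ t : {M : Matrix (Fin n) (Fin n) K // IsNilpotent M} × (Fin n → K),
      ∃ k, ((t.1.1 : Matrix (Fin n) (Fin n) K) ^ k).mulVec t.2 = 0 := by
    intro t; obtain ⟨e, he⟩ := t.1.2; exact ⟨e, by rw [he, Matrix.zero_mulVec]⟩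
  have hdle : ∀ t, Nat.find (hex t) ≤ n := by
    intro t
    have h := (krylov_indep (hex t)).fintype_card_le_finrank
    simpa [Module.finrank_fintype_fun_eq_card] using h
  let Ψ : ({M : Matrix (Fin n) (Fin n) K // IsNilpotent M} × (Fin n → K)) →
      Σ d : Fin (n + 1), {w : Fin (d : ℕ) → (Fin n → K) // LinearIndependent K w} :=
    fun t => ⟨⟨Nat.find (hex t), Nat.lt_succ_of_le (hdle t)⟩,
      ⟨fun i => ((t.1.1 : Matrix (Fin n) (Fin n) K) ^ (i : ℕ)).mulVec t.2, krylov_indep (hex t)⟩⟩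
  have hfiber : ∀ (d : Fin (n + 1)) (s : {w : Fin (d : ℕ) → (Fin n → K) //
        LinearIndependent K w}),
      Nat.card {t // Ψ t = ⟨d, s⟩}
        = Nat.card {B : Matrix (Fin (n - (d : ℕ))) (Fin (n - (d : ℕ))) K // IsNilpotent B}
            * q ^ ((d : ℕ) * (n - (d : ℕ))) := by
    rintro ⟨d, hdlt⟩ ⟨w, hw⟩
    have hdn : d ≤ n := Nat.lt_succ_iff.mp hdlt
    rw [← card_cond (show d + (n - d) = n by omega) w hw]
    have hpsi : ∀ (M : Matrix (Fin n) (Fin n) K) (hnil : IsNilpotent M),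
        (∀ i : Fin d, M.mulVec (w i) = if h : (i : ℕ) + 1 < d then w ⟨(i : ℕ) + 1, h⟩ else 0) →
        Ψ (⟨M, hnil⟩, if h : 0 < d then w ⟨0, h⟩ else 0)
          = ⟨⟨d, hdlt⟩, ⟨w, hw⟩⟩ := by
      intro M hnil hc
      have hiter : ∀ a (ha : a < d),
          (M ^ a).mulVec (if h : 0 < d then w ⟨0, h⟩ else 0) = w ⟨a, ha⟩ := by
        intro a
        induction a with
        | zero => intro ha; rw [pow_zero, Matrix.one_mulVec, dif_pos ha]
        | succ a IHa =>
          intro ha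
          have ha' : a < d := by omega
          rw [pow_succ', ← Matrix.mulVec_mulVec, IHa ha', hc ⟨a, ha'⟩,
            dif_pos (show a + 1 < d from ha)]
      have hMd : (M ^ d).mulVec (if h : 0 < d then w ⟨0, h⟩ else 0) = 0 := by
        rcases Nat.eq_zero_or_pos d with rfl | hd0
        · rw [pow_zero, Matrix.one_mulVec, dif_neg (lt_irrefl 0)]
        · obtain ⟨a, rfl⟩ : ∃ a, d = a + 1 := ⟨d - 1, by omega⟩
          have ha' : a < a + 1 := by omega
          rw [pow_succ', ← Matrix.mulVec_mulVec, hiter a ha', hc ⟨a, ha'⟩,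
            dif_neg (show ¬(a + 1 < a + 1) by omega)]
      have hfind : Nat.find (hex (⟨M, hnil⟩, if h : 0 < d then w ⟨0, h⟩ else 0)) = d := by
        rw [Nat.find_eq_iff]
        exact ⟨hMd, fun k hk hzero => hw.ne_zero ⟨k, hk⟩ (by rw [← hiter k hk, hzero])⟩
      have hgen : ∀ (k : ℕ) (hk : k < n + 1) (hkd : k = d)
          (t : Fin k → Fin n → K) (ht : LinearIndependent K t),
          (∀ i : Fin k, t i = w ⟨(i : ℕ), lt_of_lt_of_eq i.isLt hkd⟩) →
          (⟨⟨k, hk⟩, ⟨t, ht⟩⟩ : Σ e : Fin (n + 1),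
            {u : Fin (e : ℕ) → (Fin n → K) // LinearIndependent K u}) = ⟨⟨d, hdlt⟩, ⟨w, hw⟩⟩ := by
        intro k hk hkd
        subst hkd
        intro t ht hcomp
        have ht' : t = w := funext fun i => (hcomp i).trans (congrArg w (Fin.ext rfl))
        subst ht'
        rfl
      exact hgen _ (Nat.lt_succ_of_le (hdle _)) hfind _ (krylov_indep _)
        (fun i => hiter (i : ℕ) (lt_of_lt_of_eq i.isLt hfind))
    refine (Nat.card_congr (Equiv.ofBijective
      (fun y => ⟨(⟨y.1, y.2.1⟩, if h : 0 < d then w ⟨0, h⟩ else 0),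
        hpsi y.1 y.2.1 y.2.2⟩) ⟨?_, ?_⟩)).symm
    · intro y1 y2 h
      apply Subtype.ext
      exact congrArg (fun z => (z.1.1.1 : Matrix (Fin n) (Fin n) K)) h
    · rintro ⟨⟨⟨M, hnil⟩, v⟩, ht⟩
      have hd : Nat.find (hex (⟨M, hnil⟩, v)) = d := congrArg (fun z => (z.1 : ℕ)) ht
      subst hd
      have h5 : (fun j => if h : j < Nat.find (hex (⟨M, hnil⟩, v)) then (M ^ j).mulVec v else 0)
          = (fun j => if h : j < Nat.find (hex (⟨M, hnil⟩, v)) then w ⟨j, h⟩ else 0) :=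
        congrArg (fun (x : Σ e : Fin (n + 1), {u : Fin (e : ℕ) → (Fin n → K) //
            LinearIndependent K u}) (j : ℕ) =>
          if h : j < (x.1 : ℕ) then x.2.1 ⟨j, h⟩ else 0) ht
      have htuple : ∀ j (hj : j < Nat.find (hex (⟨M, hnil⟩, v))),
          (M ^ j).mulVec v = w ⟨j, hj⟩ := by
        intro j hj
        have h6 := congrFun h5 j
        rwa [dif_pos hj, dif_pos hj] at h6
      have hcond : ∀ i : Fin (Nat.find (hex (⟨M, hnil⟩, v))),
          M.mulVec (w i) = if h : (i : ℕ) + 1 < Nat.find (hex (⟨M, hnil⟩, v)) then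
            w ⟨(i : ℕ) + 1, h⟩ else 0 := by
        intro i
        have hwi : w i = (M ^ (i : ℕ)).mulVec v :=
          ((htuple (i : ℕ) i.isLt).trans (congrArg w (Fin.ext rfl))).symm
        rw [hwi, Matrix.mulVec_mulVec, ← pow_succ']
        by_cases hi1 : (i : ℕ) + 1 < Nat.find (hex (⟨M, hnil⟩, v))
        · rw [dif_pos hi1, ← htuple ((i : ℕ) + 1) hi1]
        · rw [dif_neg hi1]
          exact mulVec_pow_eq_zero_of_le (Nat.find_spec (hex (⟨M, hnil⟩, v)))
            (by have := i.isLt; omega)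
      have hv0 : (if h : 0 < Nat.find (hex (⟨M, hnil⟩, v)) then w ⟨0, h⟩ else 0) = v := by
        by_cases h0 : 0 < Nat.find (hex (⟨M, hnil⟩, v))
        · rw [dif_pos h0, ← htuple 0 h0, pow_zero, Matrix.one_mulVec]
        · rw [dif_neg h0]
          have hz := Nat.find_spec (hex (⟨M, hnil⟩, v))
          rw [show Nat.find (hex (⟨M, hnil⟩, v)) = 0 by omega, pow_zero,
            Matrix.one_mulVec] at hz
          exact hz.symm
      refine ⟨⟨M, hnil, hcond⟩, ?_⟩
      apply Subtype.ext
      exact Prod.ext rfl hv0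
  have hwcard : ∀ d : ℕ, d ≤ n →
      Nat.card {w : Fin d → (Fin n → K) // LinearIndependent K w}
        = ∏ i : Fin d, (q ^ n - q ^ (i : ℕ)) := by
    intro d hd
    have h := card_linearIndependent (K := K) (V := Fin n → K) (k := d)
      (by simpa [Module.finrank_fintype_fun_eq_card] using hd)
    simpa [Module.finrank_fintype_fun_eq_card] using h
  have hTsum : Nat.card {M : Matrix (Fin n) (Fin n) K // IsNilpotent M} * q ^ n
      = ∑ d : Fin (n + 1), (∏ i : Fin (d : ℕ), (q ^ n - q ^ (i : ℕ))) *
          (Nat.card {B : Matrix (Fin (n - (d : ℕ))) (Fin (n - (d : ℕ))) K // IsNilpotent B}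
            * q ^ ((d : ℕ) * (n - (d : ℕ)))) := by
    have h1 : Nat.card ({M : Matrix (Fin n) (Fin n) K // IsNilpotent M} × (Fin n → K))
        = Nat.card {M : Matrix (Fin n) (Fin n) K // IsNilpotent M} * q ^ n := by
      rw [Nat.card_prod]
      congr 1
      rw [Nat.card_eq_fintype_card, Fintype.card_fun, Fintype.card_fin]
    rw [← h1, Nat.card_congr (Equiv.sigmaFiberEquiv Ψ).symm, nat_card_sigma,
      ← Finset.univ_sigma_univ, Finset.sum_sigma]
    refine Finset.sum_congr rfl (fun d _ => ?_)
    rw [Finset.sum_congr rfl (fun s _ => hfiber d s), Finset.sum_const, Finset.card_univ,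
      ← Nat.card_eq_fintype_card, hwcard (d : ℕ) (Nat.lt_succ_iff.mp d.isLt), smul_eq_mul]
  rw [Fin.sum_univ_succ] at hTsum
  simp only [Fin.val_zero, Nat.sub_zero, Nat.zero_mul, pow_zero, mul_one, Fin.val_succ,
    Finset.univ_eq_empty, Finset.prod_empty, one_mul] at hTsum
  rw [Finset.sum_congr rfl (fun j _ => by
    rw [IH (n - ((j : ℕ) + 1)) (by omega)])] at hTsum
  refine final_numeric q n _ hq2 hn ?_
  rw [hTsum, ← Fin.sum_univ_eq_sum_range
    (fun j => (∏ i ∈ Finset.range (j + 1), (q ^ n - q ^ i)) *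
      (q ^ ((n - (j + 1)) * (n - (j + 1) - 1)) * q ^ ((j + 1) * (n - (j + 1))))) n]
  refine congrArg₂ (· + ·) (by rw [Finset.prod_eq_one (fun i _ => absurd i.isLt (by simp)), one_mul]; rfl) (Finset.sum_congr rfl (fun j _ => ?_))
  rw [Fin.prod_univ_eq_prod_range (fun i => q ^ n - q ^ i) ((j : ℕ) + 1)]

theorem card_nilpotent_matrix (K : Type*) [Field K] [Fintype K] (n : ℕ) :
    Nat.card {M : Matrix (Fin n) (Fin n) K // IsNilpotent M}
      = Fintype.card K ^ (n * (n - 1)) := by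
  classical
  induction n using Nat.strong_induction_on with
  | _ n IH =>
  rcases Nat.eq_zero_or_pos n with rfl | hn
  · haveI : Unique {M : Matrix (Fin 0) (Fin 0) K // IsNilpotent M} :=
      ⟨⟨⟨0, ⟨1, by simp⟩⟩⟩, fun a => Subtype.ext (Subsingleton.elim _ _)⟩
    rw [Nat.card_unique]
    simp
  · exact main_case (fun m hm => IH m hm) hn

end FH

noncomputable def unitsEquivIsUnit {M : Type*} [Monoid M] : Mˣ ≃ {x : M // IsUnit x} where
  toFun u := ⟨u, u.isUnit⟩
  invFun x := x.2.unit
  left_inv u := Units.ext u.isUnit.unit_spec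
  right_inv x := Subtype.ext x.2.unit_spec

/-- Let `A` be a finite ring, `K₁, …, K_s` finite fields with `qᵢ = |Kᵢ|`, and
`p : A → ∏ᵢ Mat_{nᵢ}(Kᵢ)` a surjective ring homomorphism whose kernel consists of nilpotent
elements.  Then
`#{nilpotents of A} · ∏ᵢ |GL_{nᵢ}(Kᵢ)| = #{units of A} · ∏ᵢ qᵢ^{nᵢ(nᵢ−1)}`. -/
theorem card_nilpotent_mul_card_GL_eq_card_units_mul
    {A : Type*} [Ring A] [Finite A] {s : ℕ}
    (K : Fin s → Type*) [∀ i, Field (K i)] [∀ i, Fintype (K i)]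
    (n : Fin s → ℕ)
    (p : A →+* ∀ i, Matrix (Fin (n i)) (Fin (n i)) (K i))
    (hsurj : Function.Surjective p)
    (hker : ∀ a : A, p a = 0 → IsNilpotent a) :
    Nat.card {a : A // IsNilpotent a} *
        ∏ i, Nat.card (Matrix (Fin (n i)) (Fin (n i)) (K i))ˣ =
      Nat.card Aˣ * ∏ i, Fintype.card (K i) ^ (n i * (n i - 1)) := by
  classical
  have hnil_iff : ∀ a : A, IsNilpotent a ↔ IsNilpotent (p a) := by
    intro a
    constructor
    · intro h; exact h.map p
    · rintro ⟨k, hk⟩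
      obtain ⟨j, hj⟩ := hker (a ^ k) (by rw [map_pow, hk])
      exact ⟨k * j, by rw [pow_mul, hj]⟩
  have hunit_iff : ∀ a : A, IsUnit a ↔ IsUnit (p a) := by
    intro a
    constructor
    · intro h; exact h.map p
    · intro h
      obtain ⟨u, hu⟩ := h
      obtain ⟨b, hb⟩ := hsurj ↑u⁻¹
      have h1 : IsUnit (a * b) := by
        have hn : IsNilpotent (a * b - 1) := hker _ (by
          rw [map_sub, _root_.map_mul, hb, ← hu, _root_.map_one, Units.mul_inv, sub_self])
        simpa using hn.isUnit_add_one
      have h2 : IsUnit (b * a) := by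
        have hn : IsNilpotent (b * a - 1) := hker _ (by
          rw [map_sub, _root_.map_mul, hb, ← hu, _root_.map_one, Units.inv_mul, sub_self])
        simpa using hn.isUnit_add_one
      obtain ⟨u1, hu1⟩ := h1
      obtain ⟨u2, hu2⟩ := h2
      have hac : a * (b * ↑u1⁻¹) = 1 := by
        rw [← mul_assoc, ← hu1, Units.mul_inv]
      have hca : (↑u2⁻¹ * b) * a = 1 := by
        rw [mul_assoc, ← hu2, Units.inv_mul]
      have heq : b * ↑u1⁻¹ = ↑u2⁻¹ * b := by
        calc b * ↑u1⁻¹ = ((↑u2⁻¹ * b) * a) * (b * ↑u1⁻¹) := by rw [hca, one_mul]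
          _ = (↑u2⁻¹ * b) * (a * (b * ↑u1⁻¹)) := by rw [mul_assoc]
          _ = ↑u2⁻¹ * b := by rw [hac, mul_one]
      exact ⟨⟨a, b * ↑u1⁻¹, hac, by rw [heq]; exact hca⟩, rfl⟩
  let σ := Function.surjInv hsurj
  have hσ : ∀ b, p (σ b) = b := Function.surjInv_eq hsurj
  let e : A ≃ (∀ i, Matrix (Fin (n i)) (Fin (n i)) (K i)) × {a : A // p a = 0} :=
    { toFun := fun a => (p a, ⟨a - σ (p a), by rw [map_sub, hσ, sub_self]⟩)
      invFun := fun x => σ x.1 + x.2.1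
      left_inv := fun a => by
        simp only
        rw [add_comm, sub_add_cancel]
      right_inv := fun x => by
        obtain ⟨b, k, hk⟩ := x
        have hpk : p (σ b + k) = b := by rw [map_add, hσ, hk, add_zero]
        refine Prod.ext ?_ (Subtype.ext ?_)
        · simpa using hpk
        · simp only
          rw [hpk, add_sub_cancel_left] }
  have e_nil : {a : A // IsNilpotent a} ≃
      {b : ∀ i, Matrix (Fin (n i)) (Fin (n i)) (K i) // IsNilpotent b} × {a : A // p a = 0} :=
    (Equiv.subtypeEquiv e (fun a => hnil_iff a)).trans Equiv.prodSubtypeFstEquivSubtypeProd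
  have e_unit : {a : A // IsUnit a} ≃
      {b : ∀ i, Matrix (Fin (n i)) (Fin (n i)) (K i) // IsUnit b} × {a : A // p a = 0} :=
    (Equiv.subtypeEquiv e (fun a => hunit_iff a)).trans Equiv.prodSubtypeFstEquivSubtypeProd
  have hiffn : ∀ b : ∀ i, Matrix (Fin (n i)) (Fin (n i)) (K i),
      IsNilpotent b ↔ ∀ i, IsNilpotent (b i) := by
    intro b
    constructor
    · rintro ⟨k, hk⟩ i
      exact ⟨k, by have := congrFun hk i; simpa using this⟩
    · intro h
      choose f hf using h
      refine ⟨Finset.univ.sup f, ?_⟩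
      ext i j1 j2
      have hz : (b i) ^ (Finset.univ.sup f) = 0 := by
        obtain ⟨c, hc⟩ := Nat.exists_eq_add_of_le (Finset.le_sup (Finset.mem_univ i))
        rw [hc, pow_add, hf i, zero_mul]
      have : ((b ^ Finset.univ.sup f) i) = 0 := by
        rw [Pi.pow_apply, hz]
      rw [this]
      rfl
  have hiffu : ∀ b : ∀ i, Matrix (Fin (n i)) (Fin (n i)) (K i),
      IsUnit b ↔ ∀ i, IsUnit (b i) := by
    intro b
    constructor
    · rintro ⟨u, hu⟩ i
      refine ⟨⟨b i, Units.val u⁻¹ i, ?_, ?_⟩, rfl⟩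
      · have := congrFun u.mul_inv i
        rw [hu] at this
        exact this
      · have := congrFun u.inv_mul i
        rw [hu] at this
        exact this
    · intro h
      refine ⟨⟨b, fun i => ↑(h i).unit⁻¹, ?_, ?_⟩, rfl⟩
      · funext i
        have := (h i).unit.mul_inv
        rw [(h i).unit_spec] at this
        exact this
      · funext i
        have := (h i).unit.inv_mul
        rw [(h i).unit_spec] at this
        exact this
  have hnilB : Nat.card {b : ∀ i, Matrix (Fin (n i)) (Fin (n i)) (K i) // IsNilpotent b}
      = ∏ i, Nat.card {M : Matrix (Fin (n i)) (Fin (n i)) (K i) // IsNilpotent M} := by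
    rw [Nat.card_congr ((Equiv.subtypeEquiv (Equiv.refl _) (fun b => hiffn b)).trans
      (Equiv.subtypePiEquivPi)), Nat.card_pi]
  have hunitB : Nat.card {b : ∀ i, Matrix (Fin (n i)) (Fin (n i)) (K i) // IsUnit b}
      = ∏ i, Nat.card (Matrix (Fin (n i)) (Fin (n i)) (K i))ˣ := by
    rw [Nat.card_congr ((Equiv.subtypeEquiv (Equiv.refl _) (fun b => hiffu b)).trans
      (Equiv.subtypePiEquivPi)), Nat.card_pi]
    exact Finset.prod_congr rfl (fun i _ => (Nat.card_congr (unitsEquivIsUnit)).symm)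
  have c1 : Nat.card {a : A // IsNilpotent a}
      = Nat.card {b : ∀ i, Matrix (Fin (n i)) (Fin (n i)) (K i) // IsNilpotent b}
        * Nat.card {a : A // p a = 0} := by
    rw [Nat.card_congr e_nil, Nat.card_prod]
  have c2 : Nat.card Aˣ
      = Nat.card {b : ∀ i, Matrix (Fin (n i)) (Fin (n i)) (K i) // IsUnit b}
        * Nat.card {a : A // p a = 0} := by
    rw [Nat.card_congr (unitsEquivIsUnit (M := A)), Nat.card_congr e_unit, Nat.card_prod]
  rw [c1, c2, hnilB, hunitB]
  rw [Finset.prod_congr rfl (fun i _ => card_nilpotent_matrix (K i) (n i))]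
  ring
end

section
/- Let t ≥ 1 and r_1, …, r_t be nonnegative integers, set r_k = 0 for k > t, and let λ be the partition having exactly r_k parts equal to k, with parts λ_1 ≥ λ_2 ≥ ⋯ ≥ λ_N (N = ∑_k r_k). For a box s = (i,j) of the Young diagram of λ (i.e. 1 ≤ j ≤ N and 1 ≤ i ≤ λ_j), let a(s) = λ_j − i be its arm length and l(s) = #{j' : λ_{j'} ≥ i} − j its leg length. Then for every field K and every nonzero element q ∈ K, the following identity holds in the polynomial ring K[z]: ∑_{i≥1} ∑_{l≥1} q^{−(r_i + r_{i+1} + ⋯ + r_{i+l})} (q^{r_{i+l}} − 1) z^l = (q − 1) · ∑_{s ∈ λ, a(s) ≥ 1} q^{−1−l(s)} z^{a(s)} (both sums are finite, since q^{r_{i+l}} − 1 = 0 whenever i + l > t). -/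
open Finset Polynomial

private lemma geom_Ioc {K : Type*} [Field K] (q : K) {a b : ℕ} (h : a ≤ b) :
    ∑ j ∈ Ioc a b, (q - 1) * q ^ j = q ^ (b + 1) - q ^ (a + 1) := by
  induction b, h using Nat.le_induction with
  | base => simp
  | succ b hb ih =>
    rw [Finset.sum_Ioc_succ_top (by omega), ih]
    ring

section Struct
variable (t : ℕ) (r : ℕ → ℕ) (N : ℕ) (lam : ℕ → ℕ)

/-- boundedness of parts -/
private lemma lam_le_t (hr : ∀ k, t < k → r k = 0)
    (hcount : ∀ k, 1 ≤ k → ((Icc 1 N).filter fun j => lam j = k).card = r k)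
    {j : ℕ} (hj : j ∈ Icc 1 N) : lam j ≤ t := by
  by_contra h
  push_neg at h
  have h1 : r (lam j) = 0 := hr _ h
  have h2 := hcount (lam j) (by omega)
  have h3 : j ∈ (Icc 1 N).filter fun j' => lam j' = lam j := by
    simp only [mem_filter]; exact ⟨hj, trivial⟩
  have := Finset.card_pos.mpr ⟨j, h3⟩
  omega

private lemma lam_anti (hmono : ∀ j, 1 ≤ j → lam (j + 1) ≤ lam j)
    {a b : ℕ} (ha : 1 ≤ a) (hab : a ≤ b) : lam b ≤ lam a := by
  induction b, hab using Nat.le_induction with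
  | base => exact le_refl _
  | succ b hb ih => exact le_trans (hmono b (by omega)) ih

/-- The set of columns of height ≥ m is an initial interval. -/
private lemma filter_ge_eq (hr : ∀ k, t < k → r k = 0)
    (hmono : ∀ j, 1 ≤ j → lam (j + 1) ≤ lam j)
    (hcount : ∀ k, 1 ≤ k → ((Icc 1 N).filter fun j => lam j = k).card = r k)
    {m : ℕ} (hm : 1 ≤ m) :
    ((Icc 1 N).filter fun j => m ≤ lam j) = Icc 1 (∑ k ∈ Icc m t, r k) := by
  have hcard : ((Icc 1 N).filter fun j => m ≤ lam j).card = ∑ k ∈ Icc m t, r k := by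
    have hbu : ((Icc 1 N).filter fun j => m ≤ lam j)
        = (Icc m t).biUnion fun k => (Icc 1 N).filter fun j => lam j = k := by
      ext j
      simp only [mem_filter, mem_biUnion, mem_Icc]
      constructor
      · rintro ⟨hj, hmj⟩
        exact ⟨lam j, ⟨hmj, lam_le_t t r N lam hr hcount (mem_Icc.mpr hj)⟩, hj, rfl⟩
      · rintro ⟨k, ⟨hk1, _⟩, hj, hjk⟩
        exact ⟨hj, hjk ▸ hk1⟩
    rw [hbu, card_biUnion]
    · exact Finset.sum_congr rfl fun k hk => hcount k (le_trans hm (mem_Icc.mp hk).1)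
    · intro x _ y _ hxy
      simp only [disjoint_left, mem_filter]
      rintro j ⟨_, hx⟩ ⟨_, hy⟩
      exact hxy (hx ▸ hy ▸ rfl)
  have hdown : ∀ j ∈ ((Icc 1 N).filter fun j => m ≤ lam j), ∀ j', 1 ≤ j' → j' ≤ j →
      j' ∈ ((Icc 1 N).filter fun j => m ≤ lam j) := by
    intro j hj j' h1 h2
    simp only [mem_filter, mem_Icc] at hj ⊢
    exact ⟨⟨h1, le_trans h2 hj.1.2⟩, le_trans hj.2 (lam_anti lam hmono h1 h2)⟩
  have hsub : ((Icc 1 N).filter fun j => m ≤ lam j) ⊆ Icc 1 (∑ k ∈ Icc m t, r k) := by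
    intro j hj
    have hj1 : 1 ≤ j := by
      have := (mem_filter.mp hj).1
      exact (mem_Icc.mp this).1
    have hsub2 : Icc 1 j ⊆ (Icc 1 N).filter fun j => m ≤ lam j := by
      intro j' hj'
      exact hdown j hj j' (mem_Icc.mp hj').1 (mem_Icc.mp hj').2
    have := Finset.card_le_card hsub2
    rw [Nat.card_Icc] at this
    rw [hcard] at this
    exact mem_Icc.mpr ⟨hj1, by omega⟩
  refine Finset.eq_of_subset_of_card_le hsub ?_
  rw [hcard, Nat.card_Icc]
  omega

end Struct

/-- Let `λ` be the partition with exactly `r_k` parts equal to `k` (for `1 ≤ k ≤ t`, and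
`r_k = 0` for `k > t`), with parts `λ_1 ≥ ⋯ ≥ λ_N`, `N = ∑_k r_k`.  For a box `s = (i,j)`
of the Young diagram (`1 ≤ j ≤ N`, `1 ≤ i ≤ λ_j`) let `a(s) = λ_j − i` be the arm length
and `l(s) = #{j' : λ_{j'} ≥ i} − j` the leg length.  Then in `K[z]`, for any nonzero `q`:
`∑_{i≥1} ∑_{l≥1} q^{−(r_i+⋯+r_{i+l})} (q^{r_{i+l}} − 1) z^l
  = (q−1) · ∑_{s ∈ λ, a(s) ≥ 1} q^{−1−l(s)} z^{a(s)}`. -/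
theorem arm_leg_zeta_identity
    (t : ℕ) (ht : 1 ≤ t) (r : ℕ → ℕ) (hr : ∀ k, t < k → r k = 0)
    (N : ℕ) (hN : N = ∑ k ∈ Icc 1 t, r k)
    (lam : ℕ → ℕ)
    (hmono : ∀ j, 1 ≤ j → lam (j + 1) ≤ lam j)
    (hsupp : ∀ j, 1 ≤ j → (1 ≤ lam j ↔ j ≤ N))
    (hcount : ∀ k, 1 ≤ k → ((Icc 1 N).filter fun j => lam j = k).card = r k)
    (K : Type*) [Field K] (q : K) (hq : q ≠ 0) :
    (∑ᶠ (i : ℕ) (_ : 1 ≤ i), ∑ᶠ (l : ℕ) (_ : 1 ≤ l),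
        C ((q ^ (∑ k ∈ Icc i (i + l), r k))⁻¹ * (q ^ r (i + l) - 1)) * X ^ l)
      = C (q - 1) *
          ∑ s ∈ (Icc 1 t ×ˢ Icc 1 N).filter fun s => s.1 < lam s.2,
            C ((q ^ (1 + (((Icc 1 N).filter fun j => s.1 ≤ lam j).card - s.2)))⁻¹) *
              X ^ (lam s.2 - s.1) := by
  -- Step 1: the finsum equals a finite double sum over `Icc 1 t × Icc 1 t`.
  have hLHS : (∑ᶠ (i : ℕ) (_ : 1 ≤ i), ∑ᶠ (l : ℕ) (_ : 1 ≤ l),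
        C ((q ^ (∑ k ∈ Icc i (i + l), r k))⁻¹ * (q ^ r (i + l) - 1)) * X ^ l)
      = ∑ i ∈ Icc 1 t, ∑ l ∈ Icc 1 t,
        C ((q ^ (∑ k ∈ Icc i (i + l), r k))⁻¹ * (q ^ r (i + l) - 1)) * X ^ l := by
    have hinner : ∀ i : ℕ, (∑ᶠ (l : ℕ) (_ : 1 ≤ l),
        C ((q ^ (∑ k ∈ Icc i (i + l), r k))⁻¹ * (q ^ r (i + l) - 1)) * X ^ l)
        = ∑ l ∈ Icc 1 t,
            C ((q ^ (∑ k ∈ Icc i (i + l), r k))⁻¹ * (q ^ r (i + l) - 1)) * X ^ l := by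
      intro i
      apply finsum_cond_eq_sum_of_cond_iff
      intro l hl
      constructor
      · intro h1
        refine mem_Icc.mpr ⟨h1, ?_⟩
        by_contra h2
        push_neg at h2
        have h3 : r (i + l) = 0 := hr _ (by omega)
        simp [h3] at hl
      · intro h; exact (mem_Icc.mp h).1
    rw [finsum_congr fun i => finsum_congr fun _ => hinner i]
    apply finsum_cond_eq_sum_of_cond_iff
    intro i hi
    constructor
    · intro h1
      refine mem_Icc.mpr ⟨h1, ?_⟩
      by_contra h2
      push_neg at h2
      apply hi
      apply Finset.sum_eq_zero
      intro l hl
      have h3 : r (i + l) = 0 := hr _ (by have := (mem_Icc.mp hl).1; omega)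
      simp [h3]
    · intro h; exact (mem_Icc.mp h).1
  -- auxiliary arithmetic facts about partial sums of `r`
  have hsplit : ∀ i l : ℕ, i + l ≤ t →
      ∑ k ∈ Icc i t, r k = (∑ k ∈ Icc i (i + l), r k) + ∑ k ∈ Icc (i + l + 1) t, r k := by
    intro i l hil
    have h1 := Finset.sum_Ico_consecutive r (show i ≤ i + l + 1 by omega)
      (show i + l + 1 ≤ t + 1 by omega)
    simp only [Finset.Ico_add_one_right_eq_Icc] at h1
    omega
  have hstep : ∀ m : ℕ, m ≤ t →
      ∑ k ∈ Icc m t, r k = r m + ∑ k ∈ Icc (m + 1) t, r k := by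
    intro m hm
    have h1 := Finset.sum_Ico_consecutive r (show m ≤ m + 1 by omega)
      (show m + 1 ≤ t + 1 by omega)
    simp only [Finset.Ico_add_one_right_eq_Icc, Finset.Icc_self, Finset.sum_singleton] at h1
    omega
  have hmono_c : ∀ i m : ℕ, i ≤ m → (∑ k ∈ Icc m t, r k) ≤ ∑ k ∈ Icc i t, r k := by
    intro i m him
    exact Finset.sum_le_sum_of_subset (Finset.Icc_subset_Icc him (le_refl t))
  have hcard_eq : ∀ m, 1 ≤ m →
      ((Icc 1 N).filter fun j => m ≤ lam j).card = ∑ k ∈ Icc m t, r k := by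
    intro m hm
    rw [filter_ge_eq t r N lam hr hmono hcount hm, Nat.card_Icc]
    omega
  -- fibers of the arm-map
  have hfiber : ∀ i l : ℕ, i ∈ Icc 1 t → l ∈ Icc 1 t →
      ((Icc 1 t ×ˢ Icc 1 N).filter fun s => s.1 < lam s.2).filter
        (fun s => (s.1, lam s.2 - s.1) = (i, l))
      = {i} ×ˢ ((Icc 1 N).filter fun j => lam j = i + l) := by
    intro i l hi hl
    have hi' := mem_Icc.mp hi
    have hl' := mem_Icc.mp hl
    ext s
    obtain ⟨x, j⟩ := s
    simp only [mem_filter, mem_product, mem_Icc, mem_singleton, Prod.mk.injEq]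
    constructor
    · rintro ⟨⟨⟨⟨hx1, hx2⟩, hj⟩, hlt⟩, hxe, hle⟩
      exact ⟨hxe, hj, by omega⟩
    · rintro ⟨hx, ⟨hj, hje⟩⟩
      subst hx
      exact ⟨⟨⟨⟨hi'.1, hi'.2⟩, hj⟩, by omega⟩, rfl, by omega⟩
  -- core computation on each fiber
  have hcore : ∀ i l : ℕ, i ∈ Icc 1 t → l ∈ Icc 1 t →
      (∑ s ∈ ({i} ×ˢ ((Icc 1 N).filter fun j => lam j = i + l)),
        C (q - 1) * (C ((q ^ (1 + ((∑ k ∈ Icc s.1 t, r k) - s.2)))⁻¹) *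
          X ^ (lam s.2 - s.1)))
      = C ((q ^ (∑ k ∈ Icc i (i + l), r k))⁻¹ * (q ^ r (i + l) - 1)) * X ^ l := by
    intro i l hi hl
    obtain ⟨hi1, hi2⟩ := mem_Icc.mp hi
    obtain ⟨hl1, hl2⟩ := mem_Icc.mp hl
    rw [Finset.sum_product, Finset.sum_singleton]
    by_cases hil : i + l ≤ t
    · -- the interesting case
      set a := ∑ k ∈ Icc (i + l + 1) t, r k with ha
      set b := ∑ k ∈ Icc (i + l) t, r k with hb
      set S := ∑ k ∈ Icc i (i + l), r k with hS
      set ci := ∑ k ∈ Icc i t, r k with hci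
      set rr := r (i + l) with hrr
      have hba : b = rr + a := hstep (i + l) hil
      have hcia : ci = S + a := hsplit i l hil
      have hab : a ≤ b := by omega
      have hSrr : rr ≤ S := by
        rw [hS, hrr]
        exact Finset.single_le_sum (f := r) (fun k _ => Nat.zero_le _)
          (mem_Icc.mpr ⟨by omega, le_refl _⟩)
      have hbc : b ≤ ci := by omega
      have hJ : ((Icc 1 N).filter fun j => lam j = i + l) = Ioc a b := by
        have e1 : ((Icc 1 N).filter fun j => lam j = i + l)
            = ((Icc 1 N).filter fun j => i + l ≤ lam j) \
              ((Icc 1 N).filter fun j => i + l + 1 ≤ lam j) := by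
          ext j
          by_cases hP : j ∈ Icc 1 N
          · simp only [mem_sdiff, mem_filter, hP, true_and, not_le]
            omega
          · simp [hP]
        rw [e1, filter_ge_eq t r N lam hr hmono hcount (by omega : 1 ≤ i + l),
          filter_ge_eq t r N lam hr hmono hcount (by omega : 1 ≤ i + l + 1)]
        ext j
        simp only [mem_sdiff, mem_Icc, mem_Ioc, not_and, not_le]
        omega
      calc (∑ j ∈ ((Icc 1 N).filter fun j => lam j = i + l),
              C (q - 1) * (C ((q ^ (1 + (ci - j)))⁻¹) * X ^ (lam j - i)))
          = ∑ j ∈ Ioc a b, C ((q - 1) * (q ^ (1 + (ci - j)))⁻¹) * X ^ l := by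
            rw [← hJ]
            refine Finset.sum_congr rfl fun j hj => ?_
            have hje : lam j = i + l := (mem_filter.mp hj).2
            have hli : lam j - i = l := by omega
            rw [hli, ← mul_assoc, ← C_mul]
        _ = C (∑ j ∈ Ioc a b, (q - 1) * (q ^ (1 + (ci - j)))⁻¹) * X ^ l := by
            rw [← Finset.sum_mul, ← map_sum]
        _ = C ((q ^ S)⁻¹ * (q ^ rr - 1)) * X ^ l := by
            congr 1
            have e3 : ∀ j ∈ Ioc a b, (q - 1) * (q ^ (1 + (ci - j)))⁻¹
                = ((q - 1) * q ^ j) * (q ^ (1 + ci))⁻¹ := by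
              intro j hj
              have hjb : j ≤ ci := le_trans (mem_Ioc.mp hj).2 hbc
              have h5 : (q ^ (1 + (ci - j))) * q ^ j = q ^ (1 + ci) := by
                rw [← pow_add]; congr 1; omega
              have h4 : (q ^ (1 + (ci - j)))⁻¹ = q ^ j * (q ^ (1 + ci))⁻¹ := by
                rw [← h5, mul_inv]
                field_simp
              rw [h4]; ring
            rw [Finset.sum_congr rfl e3, ← Finset.sum_mul, geom_Ioc q hab, hba, hcia]
            have hqS : q ^ S ≠ 0 := pow_ne_zero _ hq
            field_simp
            congr 1
            have h1 : q * q⁻¹ = 1 := mul_inv_cancel₀ hq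
            have h2 : q ^ a * q⁻¹ ^ a = 1 := by rw [← mul_pow, h1, one_pow]
            linear_combination (q ^ rr - 1) * q⁻¹ ^ S * (q ^ a * q⁻¹ ^ a * h1 + h2)
    · -- degenerate case: `i + l > t`
      have hr0 : r (i + l) = 0 := hr _ (by omega)
      have hJempty : ((Icc 1 N).filter fun j => lam j = i + l) = ∅ := by
        rw [← Finset.card_eq_zero, hcount _ (by omega), hr0]
      rw [hJempty]
      simp [hr0]
  -- assembling the right-hand side
  have hmaps : ∀ s ∈ (Icc 1 t ×ˢ Icc 1 N).filter fun s => s.1 < lam s.2,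
      (s.1, lam s.2 - s.1) ∈ Icc 1 t ×ˢ Icc 1 t := by
    intro s hs
    simp only [mem_filter, mem_product, mem_Icc] at hs ⊢
    obtain ⟨⟨⟨hx1, hx2⟩, hj⟩, hlt⟩ := hs
    have hle := lam_le_t t r N lam hr hcount (mem_Icc.mpr hj)
    exact ⟨⟨hx1, hx2⟩, by omega, by omega⟩
  have hRHS : C (q - 1) *
        (∑ s ∈ (Icc 1 t ×ˢ Icc 1 N).filter fun s => s.1 < lam s.2,
          C ((q ^ (1 + (((Icc 1 N).filter fun j => s.1 ≤ lam j).card - s.2)))⁻¹) *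
            X ^ (lam s.2 - s.1))
      = ∑ i ∈ Icc 1 t, ∑ l ∈ Icc 1 t,
          C ((q ^ (∑ k ∈ Icc i (i + l), r k))⁻¹ * (q ^ r (i + l) - 1)) * X ^ l := by
    calc C (q - 1) *
        (∑ s ∈ (Icc 1 t ×ˢ Icc 1 N).filter fun s => s.1 < lam s.2,
          C ((q ^ (1 + (((Icc 1 N).filter fun j => s.1 ≤ lam j).card - s.2)))⁻¹) *
            X ^ (lam s.2 - s.1))
        = ∑ s ∈ (Icc 1 t ×ˢ Icc 1 N).filter fun s => s.1 < lam s.2,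
            C (q - 1) * (C ((q ^ (1 + ((∑ k ∈ Icc s.1 t, r k) - s.2)))⁻¹) *
              X ^ (lam s.2 - s.1)) := by
          rw [Finset.mul_sum]
          refine Finset.sum_congr rfl fun s hs => ?_
          have hs1 : 1 ≤ s.1 := by
            simp only [mem_filter, mem_product, mem_Icc] at hs
            exact hs.1.1.1
          rw [hcard_eq s.1 hs1]
      _ = ∑ p ∈ Icc 1 t ×ˢ Icc 1 t,
            ∑ s ∈ ((Icc 1 t ×ˢ Icc 1 N).filter fun s => s.1 < lam s.2).filter
              (fun s => (s.1, lam s.2 - s.1) = p),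
            C (q - 1) * (C ((q ^ (1 + ((∑ k ∈ Icc s.1 t, r k) - s.2)))⁻¹) *
              X ^ (lam s.2 - s.1)) :=
          (Finset.sum_fiberwise_of_maps_to hmaps _).symm
      _ = ∑ i ∈ Icc 1 t, ∑ l ∈ Icc 1 t,
            ∑ s ∈ ((Icc 1 t ×ˢ Icc 1 N).filter fun s => s.1 < lam s.2).filter
              (fun s => (s.1, lam s.2 - s.1) = (i, l)),
            C (q - 1) * (C ((q ^ (1 + ((∑ k ∈ Icc s.1 t, r k) - s.2)))⁻¹) *
              X ^ (lam s.2 - s.1)) := by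
          rw [Finset.sum_product]
      _ = ∑ i ∈ Icc 1 t, ∑ l ∈ Icc 1 t,
            C ((q ^ (∑ k ∈ Icc i (i + l), r k))⁻¹ * (q ^ r (i + l) - 1)) * X ^ l := by
          refine Finset.sum_congr rfl fun i hi => Finset.sum_congr rfl fun l hl => ?_
          rw [hfiber i l hi hl]
          exact hcore i l hi hl
  rw [hLHS, ← hRHS]
end
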